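/- Let L be a subdirectly irreducible pk-algebra and C(x) = (x ∧ x') ∨ (x ∧ x')*. Then C(a) ∧ C(a)' ≤ C(b) holds for all a, b ∈ L if and only if Body(L) has at most one element. -/

import Mathlib

/-- A pseudocomplemented De Morgan algebra (pm-algebra): a bounded distributive
lattice with a De Morgan involution `dm` and a pseudocomplement `pc`. -/
class PMAlgebra (L : Type*) extends DistribLattice L, BoundedOrder L where
  dm : L → L
  pc : L → L
  dm_dm : ∀ a : L, dm (dm a) = a
  dm_inf : ∀ a b : L, dm (a ⊓ b) = dm a ⊔ dm b
  pc_iff : ∀ a b : L, a ⊓ b = ⊥ ↔ b ≤ pc a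

namespace PMAlgebra

variable {L : Type*} [PMAlgebra L]

/-- A congruence of a pm-algebra. -/
def IsCongruence (θ : L → L → Prop) : Prop :=
  Equivalence θ ∧
  (∀ a b c d : L, θ a b → θ c d → θ (a ⊓ c) (b ⊓ d)) ∧
  (∀ a b c d : L, θ a b → θ c d → θ (a ⊔ c) (b ⊔ d)) ∧
  (∀ a b : L, θ a b → θ (dm a) (dm b)) ∧
  (∀ a b : L, θ a b → θ (pc a) (pc b))

/-- `L` is simple: it has more than one element and its only congruences are
equality and the total relation. -/
def Simple (L : Type*) [PMAlgebra L] : Prop :=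
  Nontrivial L ∧ ∀ θ : L → L → Prop, IsCongruence θ →
    θ = (fun a b => a = b) ∨ θ = (fun _ _ => True)

/-- `L` is subdirectly irreducible: there is a congruence `μ ≠ Eq` contained in
every congruence different from equality. -/
def SubdirectlyIrreducible (L : Type*) [PMAlgebra L] : Prop :=
  ∃ μ : L → L → Prop, IsCongruence μ ∧ μ ≠ (fun a b => a = b) ∧
    ∀ θ : L → L → Prop, IsCongruence θ → θ ≠ (fun a b => a = b) →
      ∀ a b : L, μ a b → θ a b

/-- A prime filter of the underlying lattice of `L`. -/
def IsPrimeFilter (P : Set L) : Prop :=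
  P.Nonempty ∧ P ≠ Set.univ ∧
  (∀ a b : L, a ∈ P → a ≤ b → b ∈ P) ∧
  (∀ a b : L, a ∈ P → b ∈ P → a ⊓ b ∈ P) ∧
  (∀ a b : L, a ⊔ b ∈ P → a ∈ P ∨ b ∈ P)

/-- The Birula–Rasiowa transformation. -/
def phi (P : Set L) : Set L := {a : L | dm a ∉ P}

/-- `P` is a maximal prime filter. -/
def IsMaximalPF (P : Set L) : Prop :=
  IsPrimeFilter P ∧ ∀ Q : Set L, IsPrimeFilter Q → P ⊆ Q → Q = P

/-- `P` is a minimal prime filter. -/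
def IsMinimalPF (P : Set L) : Prop :=
  IsPrimeFilter P ∧ ∀ Q : Set L, IsPrimeFilter Q → Q ⊆ P → Q = P

/-- The body of `L`: prime filters that are neither maximal nor minimal. -/
def body (L : Type*) [PMAlgebra L] : Set (Set L) :=
  {P : Set L | IsPrimeFilter P ∧ ¬ IsMaximalPF P ∧ ¬ IsMinimalPF P}

/-- The prime filter space of `L` is φ-connected. -/
def PhiConnected (L : Type*) [PMAlgebra L] : Prop :=
  ∀ S : Set (Set L), S ⊆ {P : Set L | IsPrimeFilter P} → S.Nonempty →
    (∀ P Q : Set L, P ∈ S → IsPrimeFilter Q → P ⊆ Q → Q ∈ S) →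
    (∀ P Q : Set L, P ∈ S → IsPrimeFilter Q → Q ⊆ P → Q ∈ S) →
    (∀ P : Set L, P ∈ S → phi P ∈ S) →
    S = {P : Set L | IsPrimeFilter P}

/-- The Kleene identity. -/
def Kleene (L : Type*) [PMAlgebra L] : Prop :=
  ∀ a b : L, a ⊓ dm a ≤ b ⊔ dm b

/-- The term `C(x) = (x ∧ x') ∨ (x ∧ x')*`. -/
def C (x : L) : L := (x ⊓ dm x) ⊔ pc (x ⊓ dm x)

/-- The term `T(x) = C(x) ∧ C(x)'`. -/
def T (x : L) : L := C x ⊓ dm (C x)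

end PMAlgebra


/-!
Let `φ P = {a | a' ∉ P}` (the Birula–Rasiowa transformation). It is an inclusion-reversing
involution exchanging maximal and minimal prime filters; in a pk-algebra `P` and `φ P` are
comparable; and `a* ∈ P` iff `a` lies in no maximal prime filter containing `P`.

If the identity fails at `a, b`, a prime filter `P` containing `C(a) ∧ C(a)'` but not `C(b)`
satisfies `φ P ⊊ P ⊊ Q` for some prime `Q`, so `P ≠ φ P` both lie in the body.

Conversely, under the identity a prime filter `R` with `φ R ⊊ R` contains some `C(p) ∧ C(p)'`,
hence every `C(m)`, which makes `R` maximal; so body elements are `φ`-fixed. Each body element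
lies in a set `{R | a ∈ R, b ∉ R}` contained in the body, and for any set `E` of prime filters
closed under `φ` and without maximal members, agreeing on all prime filters outside `E` is a
congruence. Two body elements separated by some `s` give two nontrivial such congruences whose
intersection is the equality, which subdirect irreducibility forbids.
-/

namespace PMAlgebra

variable {L : Type*} [PMAlgebra L] {a b u : L} {P Q R M : Set L}

theorem dm_antitone : Antitone (dm : L → L) := fun a b h =>
  le_sup_right.trans_eq (by rw [← dm_inf, inf_eq_left.mpr h])

theorem dm_sup (a b : L) : dm (a ⊔ b) = dm a ⊓ dm b := by
  conv_lhs => rw [← dm_dm a, ← dm_dm b, ← dm_inf, dm_dm]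

theorem dm_top : dm (⊤ : L) = ⊥ :=
  le_bot_iff.mp ((dm_antitone le_top).trans_eq (dm_dm ⊥))

theorem dm_bot : dm (⊥ : L) = ⊤ := by
  rw [← dm_top, dm_dm]

theorem inf_pc_self (a : L) : a ⊓ pc a = ⊥ :=
  (pc_iff a (pc a)).mpr le_rfl

namespace IsPrimeFilter

theorem mem_of_le (hP : IsPrimeFilter P) (ha : a ∈ P) (h : a ≤ b) : b ∈ P :=
  hP.2.2.1 a b ha h

theorem inf_mem (hP : IsPrimeFilter P) (ha : a ∈ P) (hb : b ∈ P) : a ⊓ b ∈ P :=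
  hP.2.2.2.1 a b ha hb

theorem mem_or_mem (hP : IsPrimeFilter P) (h : a ⊔ b ∈ P) : a ∈ P ∨ b ∈ P :=
  hP.2.2.2.2 a b h

theorem top_mem (hP : IsPrimeFilter P) : ⊤ ∈ P :=
  let ⟨_, ha⟩ := hP.1
  hP.mem_of_le ha le_top

theorem bot_notMem (hP : IsPrimeFilter P) : ⊥ ∉ P := fun h =>
  hP.2.1 (Set.eq_univ_of_forall fun _ => hP.mem_of_le h bot_le)

theorem inf_mem_iff (hP : IsPrimeFilter P) : a ⊓ b ∈ P ↔ a ∈ P ∧ b ∈ P :=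
  ⟨fun h => ⟨hP.mem_of_le h inf_le_left, hP.mem_of_le h inf_le_right⟩,
    fun h => hP.inf_mem h.1 h.2⟩

theorem sup_mem_iff (hP : IsPrimeFilter P) : a ⊔ b ∈ P ↔ a ∈ P ∨ b ∈ P :=
  ⟨hP.mem_or_mem, fun h => h.elim (hP.mem_of_le · le_sup_left) (hP.mem_of_le · le_sup_right)⟩

theorem pc_notMem (hP : IsPrimeFilter P) (ha : a ∈ P) : pc a ∉ P := fun h =>
  hP.bot_notMem (inf_pc_self a ▸ hP.inf_mem ha h)

end IsPrimeFilter

theorem isPrimeFilter_compl_of_isPrime {J : Order.Ideal L} (hJ : J.IsPrime) :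
    IsPrimeFilter (J : Set L)ᶜ := by
  refine ⟨⟨⊤, hJ.top_notMem⟩, Set.compl_ne_univ.mpr J.nonempty,
    fun a b ha hab hb => ha (J.lower hab hb), fun a b ha hb h => ?_, fun a b h => ?_⟩
  · exact (hJ.mem_or_mem h).elim ha hb
  · by_contra! hab
    simp only [Set.mem_compl_iff, not_not] at hab
    exact h (Order.Ideal.sup_mem hab.1 hab.2)

theorem exists_isPrimeFilter_of_disjoint {F : Order.PFilter L} {I : Order.Ideal L}
    (h : Disjoint (F : Set L) I) :
    ∃ P : Set L, IsPrimeFilter P ∧ (F : Set L) ⊆ P ∧ Disjoint P I := by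
  obtain ⟨J, hJ, hIJ, hFJ⟩ := DistribLattice.prime_ideal_of_disjoint_filter_ideal h
  exact ⟨_, isPrimeFilter_compl_of_isPrime hJ, hFJ.subset_compl_right,
    Set.disjoint_compl_left_iff_subset.mpr hIJ⟩

theorem exists_isPrimeFilter_of_not_le (h : ¬ a ≤ b) :
    ∃ P : Set L, IsPrimeFilter P ∧ a ∈ P ∧ b ∉ P := by
  obtain ⟨P, hP, hFP, hPI⟩ := exists_isPrimeFilter_of_disjoint
    (F := Order.PFilter.principal a) (I := Order.Ideal.principal b)
    (Set.disjoint_left.mpr fun _ hax hxb => h (le_trans hax hxb))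
  exact ⟨P, hP, hFP (le_refl a), Set.disjoint_right.mp hPI (Order.Ideal.mem_principal.mpr le_rfl)⟩

theorem eq_of_forall_isPrimeFilter (h : ∀ P, IsPrimeFilter P → (a ∈ P ↔ b ∈ P)) : a = b := by
  refine le_antisymm (of_not_not fun hab => ?_) (of_not_not fun hba => ?_)
  · obtain ⟨P, hP, ha, hb⟩ := exists_isPrimeFilter_of_not_le hab
    exact hb ((h P hP).mp ha)
  · obtain ⟨P, hP, hb, ha⟩ := exists_isPrimeFilter_of_not_le hba
    exact ha ((h P hP).mpr hb)

theorem IsPrimeFilter.exists_superset_mem_of_pc_notMem (hP : IsPrimeFilter P) (hu : pc u ∉ P) :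
    ∃ Q : Set L, IsPrimeFilter Q ∧ P ⊆ Q ∧ u ∈ Q := by
  let F : Set L := {t | ∃ r ∈ P, r ⊓ u ≤ t}
  have hF : Order.IsPFilter F := .of_def ⟨u, ⊤, hP.top_mem, inf_le_right⟩
    (fun _ ⟨r₁, hr₁, h₁⟩ _ ⟨r₂, hr₂, h₂⟩ => ⟨r₁ ⊓ r₂ ⊓ u, ⟨r₁ ⊓ r₂, hP.inf_mem hr₁ hr₂, le_rfl⟩,
      (inf_le_inf_right u inf_le_left).trans h₁, (inf_le_inf_right u inf_le_right).trans h₂⟩)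
    (fun hxy ⟨r, hr, h⟩ => ⟨r, hr, h.trans hxy⟩)
  have hdisj : Disjoint (hF.toPFilter : Set L) (Order.Ideal.principal (⊥ : L) : Set L) := by
    refine Set.disjoint_left.mpr fun t ⟨r, hr, hrt⟩ ht => hu (hP.mem_of_le hr ((pc_iff u r).mp ?_))
    rw [inf_comm]
    exact le_bot_iff.mp (hrt.trans (Order.Ideal.mem_principal.mp ht))
  obtain ⟨Q, hQ, hFQ, -⟩ := exists_isPrimeFilter_of_disjoint hdisj
  exact ⟨Q, hQ, fun r hr => hFQ ⟨r, hr, inf_le_left⟩, hFQ ⟨⊤, hP.top_mem, inf_le_right⟩⟩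

theorem isPrimeFilter_sUnion_of_isChain {c : Set (Set L)} (hc : ∀ P ∈ c, IsPrimeFilter P)
    (hch : IsChain (· ⊆ ·) c) (hne : c.Nonempty) : IsPrimeFilter (⋃₀ c) := by
  obtain ⟨P₀, hP₀⟩ := hne
  refine ⟨⟨⊤, P₀, hP₀, (hc P₀ hP₀).top_mem⟩, fun h => ?_, ?_, ?_, ?_⟩
  · obtain ⟨P, hP, hbot⟩ := (h ▸ Set.mem_univ ⊥ : ⊥ ∈ ⋃₀ c)
    exact (hc P hP).bot_notMem hbot
  · rintro a b ⟨P, hP, ha⟩ hab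
    exact ⟨P, hP, (hc P hP).mem_of_le ha hab⟩
  · rintro a b ⟨P, hP, ha⟩ ⟨Q, hQ, hb⟩
    rcases hch.total hP hQ with hPQ | hQP
    · exact ⟨Q, hQ, (hc Q hQ).inf_mem (hPQ ha) hb⟩
    · exact ⟨P, hP, (hc P hP).inf_mem ha (hQP hb)⟩
  · rintro a b ⟨P, hP, hab⟩
    exact ((hc P hP).mem_or_mem hab).imp (⟨P, hP, ·⟩) (⟨P, hP, ·⟩)

theorem IsPrimeFilter.exists_isMaximalPF_superset (hP : IsPrimeFilter P) :
    ∃ M : Set L, IsMaximalPF M ∧ P ⊆ M := by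
  obtain ⟨M, hPM, hM⟩ := zorn_subset_nonempty {Q : Set L | IsPrimeFilter Q}
    (fun c hc hch hne => ⟨_, isPrimeFilter_sUnion_of_isChain hc hch hne,
      fun _ => Set.subset_sUnion_of_mem⟩) P hP
  exact ⟨M, ⟨hM.prop, fun Q hQ hMQ => (hM.eq_of_le hQ hMQ).symm⟩, hPM⟩

theorem IsPrimeFilter.pc_mem_iff (hP : IsPrimeFilter P) :
    pc u ∈ P ↔ ∀ M : Set L, IsMaximalPF M → P ⊆ M → u ∉ M := by
  refine ⟨fun h M hM hPM huM => hM.1.pc_notMem huM (hPM h), fun h => of_not_not fun hu => ?_⟩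
  obtain ⟨Q, hQ, hPQ, huQ⟩ := hP.exists_superset_mem_of_pc_notMem hu
  obtain ⟨M, hM, hQM⟩ := hQ.exists_isMaximalPF_superset
  exact h M hM (hPQ.trans hQM) (hQM huQ)

theorem IsMaximalPF.pc_mem_iff (hM : IsMaximalPF M) : pc u ∈ M ↔ u ∉ M := by
  rw [hM.1.pc_mem_iff]
  exact ⟨fun h => h M hM subset_rfl, fun h M' hM' hMM' => by rwa [hM.2 M' hM'.1 hMM']⟩

theorem IsMaximalPF.C_mem (hM : IsMaximalPF M) (b : L) : C b ∈ M := by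
  by_cases h : b ⊓ dm b ∈ M
  · exact hM.1.mem_of_le h le_sup_left
  · exact hM.1.mem_of_le (hM.pc_mem_iff.mpr h) le_sup_right

theorem not_isMaximalPF_of_ssubset (hQ : IsPrimeFilter Q) (h : P ⊂ Q) : ¬ IsMaximalPF P :=
  fun hP => h.ne (hP.2 Q hQ h.subset).symm

theorem not_isMinimalPF_of_ssubset (hP : IsPrimeFilter P) (h : P ⊂ Q) : ¬ IsMinimalPF Q :=
  fun hQ => h.ne (hQ.2 P hP h.subset)

theorem dm_mem_iff_notMem_phi : dm a ∈ P ↔ a ∉ phi P :=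
  not_not.symm

theorem phi_phi (P : Set L) : phi (phi P) = P := by
  ext a
  simp only [phi, Set.mem_ofPred_eq, dm_dm, not_not]

theorem phi_subset_phi (h : P ⊆ Q) : phi Q ⊆ phi P :=
  fun _ ha hb => ha (h hb)

theorem isPrimeFilter_phi (hP : IsPrimeFilter P) : IsPrimeFilter (phi P) := by
  refine ⟨⟨⊤, show dm (⊤ : L) ∉ P from dm_top (L := L) ▸ hP.bot_notMem⟩,
    fun h => (h ▸ Set.mem_univ ⊥ : ⊥ ∈ phi P) (dm_bot (L := L) ▸ hP.top_mem),
    fun a b ha hab hb => ha (hP.mem_of_le hb (dm_antitone hab)), fun a b ha hb h => ?_,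
    fun a b h => ?_⟩
  · rw [dm_inf] at h
    exact (hP.mem_or_mem h).elim ha hb
  · by_contra! hab
    exact h (dm_sup a b ▸ hP.inf_mem (dm_mem_iff_notMem_phi.mpr hab.1)
      (dm_mem_iff_notMem_phi.mpr hab.2))

theorem IsMaximalPF.isMinimalPF_phi (hM : IsMaximalPF M) : IsMinimalPF (phi M) := by
  refine ⟨isPrimeFilter_phi hM.1, fun Q hQ hQM => ?_⟩
  have hM' := phi_subset_phi hQM
  rw [phi_phi] at hM'
  rw [← hM.2 _ (isPrimeFilter_phi hQ) hM', phi_phi]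

theorem IsMinimalPF.isMaximalPF_phi (hN : IsMinimalPF P) : IsMaximalPF (phi P) := by
  refine ⟨isPrimeFilter_phi hN.1, fun Q hQ hNQ => ?_⟩
  have hN' := phi_subset_phi hNQ
  rw [phi_phi] at hN'
  rw [← hN.2 _ (isPrimeFilter_phi hQ) hN', phi_phi]

theorem phi_mem_body (hP : P ∈ body L) : phi P ∈ body L :=
  ⟨isPrimeFilter_phi hP.1, fun h => hP.2.2 (phi_phi P ▸ h.isMinimalPF_phi),
    fun h => hP.2.1 (phi_phi P ▸ h.isMaximalPF_phi)⟩

theorem Kleene.phi_subset_or_subset_phi (hk : Kleene L) (hP : IsPrimeFilter P) :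
    phi P ⊆ P ∨ P ⊆ phi P := by
  refine or_iff_not_imp_left.mpr fun h x hx => of_not_not fun hx' => ?_
  obtain ⟨z, hzφ, hz⟩ := Set.not_subset.mp h
  have hxx' : x ⊓ dm x ∈ P := hP.inf_mem hx (dm_mem_iff_notMem_phi.mpr hx')
  exact (hP.mem_or_mem (hP.mem_of_le hxx' (hk x z))).elim hz hzφ

theorem Kleene.phi_subset_of_isMaximalPF (hk : Kleene L) (hM : IsMaximalPF M) : phi M ⊆ M :=
  (hk.phi_subset_or_subset_phi hM.1).elim id fun h => (hM.2 _ (isPrimeFilter_phi hM.1) h).subset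

theorem IsPrimeFilter.T_mem (hR : IsPrimeFilter R) (hsub : phi R ⊆ R) (ha : a ∈ R)
    (ha' : dm a ∈ R) : T a ∈ R := by
  have hy : a ⊓ dm a ∈ R := hR.inf_mem ha ha'
  have hdmy : dm (a ⊓ dm a) ∈ R := by
    rw [dm_inf, dm_dm]
    exact hR.mem_of_le ha le_sup_right
  have hdmpc : dm (pc (a ⊓ dm a)) ∈ R :=
    dm_mem_iff_notMem_phi.mpr fun h => hR.pc_notMem hy (hsub h)
  refine hR.inf_mem (hR.mem_of_le hy le_sup_left) ?_
  rw [C, dm_sup]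
  exact hR.inf_mem hdmy hdmpc

theorem isMaximalPF_of_T_mem (hT : ∀ a b : L, T a ≤ C b) (hR : IsPrimeFilter R)
    (hsub : phi R ⊆ R) (ha : T a ∈ R) : IsMaximalPF R := by
  refine ⟨hR, fun Q hQ hRQ => Set.Subset.antisymm (fun m hm => ?_) hRQ⟩
  by_cases hm' : dm m ∈ Q
  · rcases hR.mem_or_mem (hR.mem_of_le ha (hT a m)) with h | h
    · exact hR.mem_of_le h inf_le_left
    · exact absurd (hRQ h) (hQ.pc_notMem (hQ.inf_mem hm hm'))
  · exact hsub (phi_subset_phi hRQ hm')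

theorem isMaximalPF_of_phi_ssubset (hT : ∀ a b : L, T a ≤ C b) (hR : IsPrimeFilter R)
    (h : phi R ⊂ R) : IsMaximalPF R := by
  obtain ⟨p, hp, hp'⟩ := Set.exists_of_ssubset h
  exact isMaximalPF_of_T_mem hT hR h.subset
    (hR.T_mem h.subset hp (dm_mem_iff_notMem_phi.mpr hp'))

theorem phi_eq_of_mem_body (hk : Kleene L) (hT : ∀ a b : L, T a ≤ C b) (hP : P ∈ body L) :
    phi P = P := by
  have key : ∀ R ∈ body L, phi R ⊆ R → phi R = R := fun R hR hsub => of_not_not fun hne =>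
    hR.2.1 (isMaximalPF_of_phi_ssubset hT hR.1 (Set.ssubset_iff_subset_ne.mpr ⟨hsub, hne⟩))
  rcases hk.phi_subset_or_subset_phi hP.1 with h | h
  · exact key P hP h
  · have h' := key (phi P) (phi_mem_body hP) (by rwa [phi_phi])
    rwa [phi_phi, eq_comm] at h'

def primeDiff (a b : L) : Set (Set L) :=
  {R | IsPrimeFilter R ∧ a ∈ R ∧ b ∉ R}

theorem exists_primeDiff_subset_body (hk : Kleene L) (hT : ∀ a b : L, T a ≤ C b)
    (hP : P ∈ body L) : ∃ a b : L, P ∈ primeDiff a b ∧ primeDiff a b ⊆ body L := by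
  have hfix := phi_eq_of_mem_body hk hT hP
  obtain ⟨hPp, -, hPmin⟩ := hP
  obtain ⟨M, hM, hPM⟩ := hPp.exists_isMaximalPF_superset
  obtain ⟨x, hx, hxM⟩ : ∃ x ∈ P, x ∉ phi M := Set.not_subset.mp fun h =>
    hPmin (hM.isMinimalPF_phi.2 P hPp h ▸ hM.isMinimalPF_phi)
  have hx' : x ∈ phi P := by rwa [hfix]
  set g := pc (x ⊓ dm x)
  have hg : g ∉ phi P := by
    rw [hfix]
    exact fun h => hM.1.pc_notMem (hM.1.inf_mem (hPM hx) (dm_mem_iff_notMem_phi.mpr hxM)) (hPM h)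
  -- A maximal `R` in the set would contain `x` and `g`; a minimal one has `C x ∈ φ R`.
  refine ⟨dm (C x), dm x ⊔ g ⊓ x, ⟨hPp, ?_, ?_⟩, ?_⟩
  · rw [C, dm_sup, dm_inf, dm_dm]
    exact hPp.inf_mem (hPp.mem_of_le hx le_sup_right) (dm_mem_iff_notMem_phi.mpr hg)
  · rw [hPp.sup_mem_iff, hPp.inf_mem_iff]
    exact fun h => h.elim hx' fun h => hg (hfix.symm ▸ h.1)
  · rintro R ⟨hR, hCR, hαR⟩
    rw [hR.sup_mem_iff, hR.inf_mem_iff, not_or, not_and] at hαR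
    refine ⟨hR, fun hRmax => ?_, fun hRmin => hRmin.isMaximalPF_phi.C_mem x hCR⟩
    have hxR : x ∈ R := hk.phi_subset_of_isMaximalPF hRmax hαR.1
    exact hαR.2 (hRmax.pc_mem_iff.mpr fun h => hαR.1 (hR.mem_of_le h inf_le_right)) hxR

def agreeOff (E : Set (Set L)) (a b : L) : Prop :=
  ∀ R, IsPrimeFilter R → R ∉ E → (a ∈ R ↔ b ∈ R)

theorem isCongruence_agreeOff {E : Set (Set L)} (hφ : ∀ R ∈ E, phi R ∈ E)
    (hmax : ∀ R ∈ E, ¬ IsMaximalPF R) : IsCongruence (agreeOff E) := by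
  refine ⟨⟨fun _ _ _ _ => Iff.rfl, fun h R hR hE => (h R hR hE).symm,
    fun h₁ h₂ R hR hE => (h₁ R hR hE).trans (h₂ R hR hE)⟩, ?_, ?_, ?_, ?_⟩
  · intro a b c d hab hcd R hR hE
    rw [hR.inf_mem_iff, hR.inf_mem_iff]
    exact and_congr (hab R hR hE) (hcd R hR hE)
  · intro a b c d hab hcd R hR hE
    rw [hR.sup_mem_iff, hR.sup_mem_iff]
    exact or_congr (hab R hR hE) (hcd R hR hE)
  · intro a b hab R hR hE
    rw [dm_mem_iff_notMem_phi, dm_mem_iff_notMem_phi]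
    exact not_congr (hab _ (isPrimeFilter_phi hR) fun h => hE (phi_phi R ▸ hφ _ h))
  · intro a b hab R hR _
    rw [hR.pc_mem_iff, hR.pc_mem_iff]
    exact forall_congr' fun M => imp_congr_right fun hM => imp_congr_right fun _ =>
      not_congr (hab M hM.1 fun h => hmax M h hM)

theorem isCongruence_agreeOff_of_subset_body (hk : Kleene L) (hT : ∀ a b : L, T a ≤ C b)
    {E : Set (Set L)} (hE : E ⊆ body L) : IsCongruence (agreeOff E) :=
  isCongruence_agreeOff (fun _ hR => (phi_eq_of_mem_body hk hT (hE hR)).symm ▸ hR)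
    (fun _ hR => (hE hR).2.1)

theorem agreeOff_primeDiff_sup (a b : L) : agreeOff (primeDiff a b) (a ⊔ b) b := by
  intro R hR hE
  rw [hR.sup_mem_iff]
  exact ⟨fun h => h.elim (fun ha => of_not_not fun hb => hE ⟨hR, ha, hb⟩) id, Or.inr⟩

theorem agreeOff_primeDiff_ne (hP : P ∈ primeDiff a b) :
    agreeOff (primeDiff a b) ≠ (fun x y => x = y) := fun h => by
  have hab : a ⊔ b = b := (congrFun₂ h _ _).mp (agreeOff_primeDiff_sup a b)
  exact hP.2.2 (hab ▸ hP.1.mem_of_le hP.2.1 le_sup_left)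

theorem eq_of_agreeOff_of_agreeOff {E F : Set (Set L)}
    (hEF : ∀ R, IsPrimeFilter R → R ∉ E ∨ R ∉ F) (hE : agreeOff E a b) (hF : agreeOff F a b) :
    a = b :=
  eq_of_forall_isPrimeFilter fun R hR => (hEF R hR).elim (hE R hR) (hF R hR)

theorem SubdirectlyIrreducible.exists_ne_of_isCongruence (hsi : SubdirectlyIrreducible L)
    {θ₁ θ₂ : L → L → Prop} (h₁ : IsCongruence θ₁) (h₁' : θ₁ ≠ (fun a b => a = b))
    (h₂ : IsCongruence θ₂) (h₂' : θ₂ ≠ (fun a b => a = b)) :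
    ∃ a b : L, a ≠ b ∧ θ₁ a b ∧ θ₂ a b := by
  obtain ⟨μ, hμ, hμne, hμle⟩ := hsi
  obtain ⟨a, b, hab, hne⟩ : ∃ a b, μ a b ∧ a ≠ b := by
    by_contra! h
    exact hμne (funext₂ fun a b => propext ⟨h a b, fun hab => hab ▸ hμ.1.refl a⟩)
  exact ⟨a, b, hne, hμle θ₁ h₁ h₁' a b hab, hμle θ₂ h₂ h₂' a b hab⟩

theorem subset_of_mem_body (hk : Kleene L) (hsi : SubdirectlyIrreducible L)
    (hT : ∀ a b : L, T a ≤ C b) (hP : P ∈ body L) (hQ : Q ∈ body L) : P ⊆ Q := by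
  intro s hsP
  by_contra hsQ
  obtain ⟨a₁, b₁, hP₁, hbody₁⟩ := exists_primeDiff_subset_body hk hT hP
  obtain ⟨a₂, b₂, hQ₂, hbody₂⟩ := exists_primeDiff_subset_body hk hT hQ
  -- `P` and `Q` lie in the two sets below, and every prime filter misses one of them,
  -- according to whether it contains `s`.
  have hP₁' : P ∈ primeDiff (a₁ ⊓ s) b₁ := ⟨hP₁.1, hP₁.1.inf_mem hP₁.2.1 hsP, hP₁.2.2⟩
  have hQ₂' : Q ∈ primeDiff a₂ (b₂ ⊔ s) :=
    ⟨hQ₂.1, hQ₂.2.1, fun h => hsQ ((hQ₂.1.mem_or_mem h).resolve_left hQ₂.2.2)⟩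
  have hsub₁ : primeDiff (a₁ ⊓ s) b₁ ⊆ body L := fun R ⟨hR, ha, hb⟩ =>
    hbody₁ ⟨hR, hR.mem_of_le ha inf_le_left, hb⟩
  have hsub₂ : primeDiff a₂ (b₂ ⊔ s) ⊆ body L := fun R ⟨hR, ha, hb⟩ =>
    hbody₂ ⟨hR, ha, fun h => hb (hR.mem_of_le h le_sup_left)⟩
  obtain ⟨c, d, hcd, h₁, h₂⟩ := hsi.exists_ne_of_isCongruence
    (isCongruence_agreeOff_of_subset_body hk hT hsub₁) (agreeOff_primeDiff_ne hP₁')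
    (isCongruence_agreeOff_of_subset_body hk hT hsub₂) (agreeOff_primeDiff_ne hQ₂')
  refine hcd (eq_of_agreeOff_of_agreeOff (fun R _ => ?_) h₁ h₂)
  by_cases hs : s ∈ R
  · exact Or.inr fun h => h.2.2 (h.1.mem_of_le hs le_sup_right)
  · exact Or.inl fun h => hs (h.1.mem_of_le h.2.1 inf_le_right)

theorem T_le_C_of_body_subsingleton (hk : Kleene L) (hb : (body L).Subsingleton) (a b : L) :
    T a ≤ C b := by
  by_contra hle
  obtain ⟨P, hP, hTP, hCP⟩ := exists_isPrimeFilter_of_not_le hle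
  have hnsub : ¬ P ⊆ phi P := fun h =>
    h (hP.mem_of_le hTP inf_le_left) (hP.mem_of_le hTP inf_le_right)
  have hφP : phi P ⊂ P := ⟨(hk.phi_subset_or_subset_phi hP).resolve_right hnsub, hnsub⟩
  obtain ⟨Q, hQ, hPQ, hbQ⟩ := hP.exists_superset_mem_of_pc_notMem (u := b ⊓ dm b)
    fun h => hCP (hP.mem_of_le h le_sup_right)
  have hPQ' : P ⊂ Q := ⟨hPQ, fun h => hCP (hP.mem_of_le (h hbQ) le_sup_left)⟩
  have hPbody : P ∈ body L := ⟨hP, not_isMaximalPF_of_ssubset hQ hPQ',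
    not_isMinimalPF_of_ssubset (isPrimeFilter_phi hP) hφP⟩
  exact hφP.ne (hb (phi_mem_body hPbody) hPbody)

end PMAlgebra

open PMAlgebra

/-- In a subdirectly irreducible pk-algebra, `C(a) ⊓ C(a)' ≤ C(b)` holds for
all `a, b` iff the body has at most one element. -/
theorem C_inf_dm_C_le_C_iff_body_subsingleton {L : Type*} [PMAlgebra L]
    (hk : Kleene L) (hsi : SubdirectlyIrreducible L) :
    (∀ a b : L, C a ⊓ dm (C a) ≤ C b) ↔ (body L).Subsingleton :=
  ⟨fun hT _ hP _ hQ => (subset_of_mem_body hk hsi hT hP hQ).antisymm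
    (subset_of_mem_body hk hsi hT hQ hP), T_le_C_of_body_subsingleton hk⟩
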